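/- arXiv:2509.13898 — 3 statements merged into one kernel-verified Lean document; each statement's English description precedes it below -/
import Mathlib

section
/- If K ⊆ ℝⁿ is a convex body containing the ball hBⁿ for some h > 0, then its isoperimetric quotient satisfies iq(K) ≤ (n/h)·vol_n(K)^{1/n}, where iq(K) = vol_{n-1}(∂K)/vol_n(K)^{(n-1)/n}. -/
open MeasureTheory Metric Filter
open scoped Pointwise Topology

/-!
Since `K` is convex and contains `h • B`, we have
`K + s • B ⊆ K + (s / h) • K = (1 + s / h) • K`, so `vol (K + s • B) ≤ (1 + s / h) ^ n * vol K`.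
Hence the Minkowski quotient is bounded by `((1 + s / h) ^ n - 1) / s * vol K`, which tends to
`(n / h) * vol K` as `s → 0⁺`. Dividing `S ≤ (n / h) * vol K` by `vol K ^ ((n - 1) / n)` gives
the claim.
-/

section MinkowskiContent

variable {E : Type*} [NormedAddCommGroup E] [NormedSpace ℝ E]

theorem Convex.add_smul_closedBall_subset_smul {K : Set E} (hK : Convex ℝ K) {h s : ℝ}
    (hh : 0 < h) (hball : closedBall (0 : E) h ⊆ K) (hs : 0 ≤ s) :
    K + s • closedBall (0 : E) 1 ⊆ (1 + s / h) • K := by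
  have hBall : s • closedBall (0 : E) 1 ⊆ (s / h) • K := by
    rintro _ ⟨y, hy, rfl⟩
    refine ⟨h • y, hball ?_, ?_⟩
    · rw [mem_closedBall_zero_iff] at hy ⊢
      rw [norm_smul, Real.norm_of_nonneg hh.le]
      nlinarith [norm_nonneg y]
    · simp only [smul_smul, div_mul_cancel₀ _ hh.ne']
  calc K + s • closedBall (0 : E) 1 ⊆ K + (s / h) • K := Set.add_subset_add_left hBall
    _ = (1 + s / h) • K := by
      rw [hK.add_smul zero_le_one (div_nonneg hs hh.le), one_smul]

variable [FiniteDimensional ℝ E] [MeasurableSpace E] [BorelSpace E]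
  (μ : Measure E) [μ.IsAddHaarMeasure]

theorem Convex.measure_add_smul_closedBall_le {K : Set E} (hK : Convex ℝ K) {h s : ℝ}
    (hh : 0 < h) (hball : closedBall (0 : E) h ⊆ K) (hs : 0 ≤ s) :
    μ (K + s • closedBall (0 : E) 1)
      ≤ ENNReal.ofReal ((1 + s / h) ^ Module.finrank ℝ E) * μ K := by
  have hpos : 0 ≤ (1 + s / h) ^ Module.finrank ℝ E := by positivity
  calc μ (K + s • closedBall (0 : E) 1) ≤ μ ((1 + s / h) • K) :=
        measure_mono (hK.add_smul_closedBall_subset_smul hh hball hs)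
    _ = _ := by rw [Measure.addHaar_smul, abs_of_nonneg hpos]

theorem tendsto_one_add_div_pow_sub_one_div (n : ℕ) (h : ℝ) :
    Tendsto (fun s : ℝ => ((1 + s / h) ^ n - 1) / s) (𝓝[≠] 0) (𝓝 (n / h)) := by
  have hder : HasDerivAt (fun s : ℝ => (1 + s / h) ^ n) (n / h) 0 := by
    simpa [div_eq_mul_inv, Pi.pow_def] using
      (((hasDerivAt_id (0 : ℝ)).div_const h).const_add 1).pow n
  refine (hasDerivAt_iff_tendsto_slope.mp hder).congr fun s => ?_
  simp [slope_def_field]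

theorem Convex.le_of_tendsto_measure_add_smul_closedBall {K : Set E} (hK : Convex ℝ K)
    (hKfin : μ K ≠ ⊤) {h S : ℝ} (hh : 0 < h) (hball : closedBall (0 : E) h ⊆ K)
    (hS : Tendsto
      (fun s : ℝ => ((μ (K + s • closedBall (0 : E) 1)).toReal - (μ K).toReal) / s)
      (𝓝[>] 0) (𝓝 S)) :
    S ≤ Module.finrank ℝ E / h * (μ K).toReal := by
  have hlim : Tendsto (fun s : ℝ => ((1 + s / h) ^ Module.finrank ℝ E - 1) / s * (μ K).toReal)
      (𝓝[>] 0) (𝓝 (Module.finrank ℝ E / h * (μ K).toReal)) :=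
    ((tendsto_one_add_div_pow_sub_one_div _ h).mono_left
      (nhdsWithin_mono 0 fun _ hx => ne_of_gt hx)).mul_const _
  refine le_of_tendsto_of_tendsto hS hlim
    (eventually_mem_nhdsWithin.mono fun s (hs : 0 < s) => ?_)
  dsimp only
  have hvol : (μ (K + s • closedBall (0 : E) 1)).toReal
      ≤ (1 + s / h) ^ Module.finrank ℝ E * (μ K).toReal := by
    have hbound := ENNReal.toReal_mono (ENNReal.mul_ne_top ENNReal.ofReal_ne_top hKfin)
      (hK.measure_add_smul_closedBall_le μ hh hball hs.le)
    rwa [ENNReal.toReal_mul, ENNReal.toReal_ofReal (by positivity)] at hbound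
  rw [div_mul_eq_mul_div]
  gcongr
  linarith

end MinkowskiContent

theorem Real.rpow_one_div_mul_rpow_sub_one_div {x n : ℝ} (hx : 0 < x) (hn : n ≠ 0) :
    x ^ (1 / n) * x ^ ((n - 1) / n) = x := by
  rw [← Real.rpow_add hx, ← add_div, add_sub_cancel, div_self hn, Real.rpow_one]

theorem stmt0_general (n : ℕ) (hn : 0 < n) (h : ℝ) (hh : 0 < h)
    (K : Set (EuclideanSpace ℝ (Fin n)))
    (hKcpt : IsCompact K) (hKconv : Convex ℝ K)
    (hball : closedBall (0 : EuclideanSpace ℝ (Fin n)) h ⊆ K)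
    (S : ℝ)
    (hS : Tendsto
      (fun s : ℝ =>
        ((volume (K + s • closedBall (0 : EuclideanSpace ℝ (Fin n)) 1)).toReal
          - (volume K).toReal) / s)
      (nhdsWithin 0 (Set.Ioi 0)) (nhds S)) :
    S / (volume K).toReal ^ (((n : ℝ) - 1) / n)
      ≤ ((n : ℝ) / h) * (volume K).toReal ^ ((1 : ℝ) / n) := by
  set V := (volume K).toReal
  have hKfin : volume K ≠ ⊤ := hKcpt.measure_lt_top.ne
  have hVpos : 0 < V := ENNReal.toReal_pos
    ((measure_closedBall_pos volume 0 hh).trans_le (measure_mono hball)).ne' hKfin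
  have hSle : S ≤ n / h * V := by
    simpa using hKconv.le_of_tendsto_measure_add_smul_closedBall volume hKfin hh hball hS
  rw [div_le_iff₀ (Real.rpow_pos_of_pos hVpos _), mul_assoc,
    Real.rpow_one_div_mul_rpow_sub_one_div hVpos (Nat.cast_ne_zero.mpr hn.ne')]
  exact hSle

/-- If a convex body `K ⊆ ℝⁿ` contains the ball `h·Bⁿ` for some `h > 0`,
then its isoperimetric quotient satisfies `iq(K) ≤ (n/h)·vol_n(K)^{1/n}`, where the
surface area `S = vol_{n-1}(∂K)` is defined as the Minkowski content. -/
theorem stmt0 (n : ℕ) (hn : 0 < n) (h : ℝ) (hh : 0 < h)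
    (K : Set (EuclideanSpace ℝ (Fin n)))
    (hKcpt : IsCompact K) (hKconv : Convex ℝ K) (hKint : (interior K).Nonempty)
    (hball : closedBall (0 : EuclideanSpace ℝ (Fin n)) h ⊆ K)
    (S : ℝ)
    (hS : Tendsto
      (fun s : ℝ =>
        ((volume (K + s • closedBall (0 : EuclideanSpace ℝ (Fin n)) 1)).toReal
          - (volume K).toReal) / s)
      (nhdsWithin 0 (Set.Ioi 0)) (nhds S)) :
    S / (volume K).toReal ^ (((n : ℝ) - 1) / n)
      ≤ ((n : ℝ) / h) * (volume K).toReal ^ ((1 : ℝ) / n) :=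
  stmt0_general n hn h hh K hKcpt hKconv hball S hS
end

section
/- For every compact set E ⊆ ℝⁿ with vol_n(E) > 0, there exists x ∈ ℝⁿ such that vol_n(E ∩ (x−E)) ≥ vol_n(E)²/vol_n(E+E). -/
open MeasureTheory
open scoped Pointwise ENNReal

/-- for every compact `E ⊆ ℝⁿ` with `vol_n(E) > 0` there is `x ∈ ℝⁿ` with
`vol_n(E ∩ (x − E)) ≥ vol_n(E)²/vol_n(E+E)`. -/
theorem stmt13 (n : ℕ) (E : Set (EuclideanSpace ℝ (Fin n)))
    (hE : IsCompact E) (hpos : 0 < volume E) :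
    ∃ x : EuclideanSpace ℝ (Fin n),
      (volume E).toReal ^ 2 / (volume (E + E)).toReal
        ≤ (volume (E ∩ ({x} - E))).toReal := by
  classical
    have hEm : MeasurableSet E := hE.isClosed.measurableSet
  set S : Set (EuclideanSpace ℝ (Fin n)) := E + E with hS
  have hSc : IsCompact S := hE.add hE
  have hSm : MeasurableSet S := hSc.isClosed.measurableSet
  have hStop : volume S ≠ ⊤ := hSc.measure_lt_top.ne
  -- volume S > 0
  obtain ⟨e, he⟩ : E.Nonempty := by
    by_contra h
    rw [Set.not_nonempty_iff_eq_empty] at h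
    simp [h] at hpos
  have hES : (e +ᵥ E : Set (EuclideanSpace ℝ (Fin n))) ⊆ S := by
    intro z hz
    obtain ⟨y, hy, rfl⟩ := hz
    exact Set.add_mem_add he hy
  have hS0 : volume S ≠ 0 := by
    intro h0
    have : volume (e +ᵥ E : Set (EuclideanSpace ℝ (Fin n))) = 0 := measure_mono_null hES h0
    rw [measure_vadd] at this
    exact hpos.ne' this
  have hEtop : volume E ≠ ⊤ := hE.measure_lt_top.ne
  -- the convolution-style function
  set f : EuclideanSpace ℝ (Fin n) → EuclideanSpace ℝ (Fin n) → ℝ≥0∞ := fun x y => E.indicator 1 y * E.indicator 1 (x - y) with hf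
  have hfm : Measurable (Function.uncurry f) := by
    apply Measurable.mul
    · exact ((measurable_one.indicator hEm).comp measurable_snd)
    · exact ((measurable_one.indicator hEm).comp (measurable_fst.sub measurable_snd))
  set g : EuclideanSpace ℝ (Fin n) → ℝ≥0∞ := fun x => volume (E ∩ ({x} - E)) with hg
  have hinter : ∀ x : EuclideanSpace ℝ (Fin n), E ∩ ({x} - E) = E ∩ ((fun y => x - y) ⁻¹' E) := by
    intro x
    ext y
    simp only [Set.mem_inter_iff, Set.mem_preimage, Set.singleton_sub, Set.mem_image]
    constructor
    · rintro ⟨hy, z, hz, rfl⟩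
      exact ⟨hy, by simpa using hz⟩
    · rintro ⟨hy, hz⟩
      exact ⟨hy, x - y, hz, by abel⟩
  have hgi : ∀ x : EuclideanSpace ℝ (Fin n), g x = ∫⁻ y, f x y := by
    intro x
    have : ∀ y : EuclideanSpace ℝ (Fin n), f x y = (E ∩ ({x} - E)).indicator 1 y := by
      intro y
      rw [hinter]
      by_cases hy : y ∈ E <;> by_cases hz : x - y ∈ E <;>
        simp [hf, Set.indicator_apply, hy, hz, Set.mem_inter_iff]
    simp only [this]
    rw [lintegral_indicator_one]
    have : MeasurableSet ((fun y => x - y) ⁻¹' E) :=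
      hEm.preimage (measurable_const.sub measurable_id)
    rw [hinter x]
    exact hEm.inter this
  have hgm : Measurable g := by
    have : Measurable fun x => ∫⁻ y, f x y := hfm.lintegral_prod_right
    simpa only [← hgi] using this
  -- total integral of g is (volume E)^2
  have htot : ∫⁻ x, g x = volume E * volume E := by
    simp only [hgi]
    rw [lintegral_lintegral_swap hfm.aemeasurable]
    have key : ∀ y : EuclideanSpace ℝ (Fin n),
        ∫⁻ x, E.indicator 1 (x - y) = volume E := by
      intro y
      rw [lintegral_sub_right_eq_self (E.indicator 1) y, lintegral_indicator_one hEm]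
    have inner : ∀ y : EuclideanSpace ℝ (Fin n), ∫⁻ x, f x y = E.indicator 1 y * volume E := by
      intro y
      by_cases hy : y ∈ E
      · simp only [hf, Set.indicator_of_mem hy, Pi.one_apply, one_mul]
        exact key y
      · simp [hf, Set.indicator_of_notMem hy]
    simp only [inner]
    rw [lintegral_mul_const _ (measurable_one.indicator hEm), lintegral_indicator_one hEm]
  -- g vanishes off S
  have hgS : ∀ x : EuclideanSpace ℝ (Fin n), x ∉ S → g x = 0 := by
    intro x hx
    have : E ∩ ({x} - E) = ∅ := by
      ext y
      simp only [Set.mem_inter_iff, Set.mem_empty_iff_false, iff_false, not_and]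
      intro hy hz
      rw [Set.singleton_sub, Set.mem_image] at hz
      obtain ⟨z, hzE, hzy⟩ := hz
      have hxyz : x = y + z := by rw [← hzy]; exact (sub_add_cancel x z).symm
      exact hx (by rw [hxyz]; exact Set.add_mem_add hy hzE)
    show volume (E ∩ ({x} - E)) = 0
    rw [this]
    simp
  have hrestrict : ∫⁻ x in S, g x = volume E * volume E := by
    rw [← htot]
    rw [← lintegral_indicator hSm]
    congr 1
    ext x
    by_cases hx : x ∈ S
    · simp [hx]
    · simp [hx, hgS x hx]
  set c : ℝ≥0∞ := volume E * volume E / volume S with hc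
  have hcne : c ≠ ⊤ := by
    simp only [hc]
    exact (ENNReal.div_lt_top (ENNReal.mul_ne_top hEtop hEtop) hS0).ne
  by_contra hcon
  push_neg at hcon
  have hgx : ∀ x : EuclideanSpace ℝ (Fin n), g x < c := by
    intro x
    have hgxfin : g x ≠ ⊤ := by
      have : g x ≤ volume E := measure_mono Set.inter_subset_left
      exact (lt_of_le_of_lt this hEtop.lt_top).ne
    have hcr : c.toReal = (volume E).toReal ^ 2 / (volume S).toReal := by
      rw [hc, ENNReal.toReal_div, ENNReal.toReal_mul, sq]
    have := hcon x
    rw [← hcr] at this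
    exact (ENNReal.toReal_lt_toReal hgxfin hcne).mp this
  have hlt : ∫⁻ x in S, g x < ∫⁻ x in S, c := by
    apply setLIntegral_strict_mono hSm hS0 measurable_const
    · rw [hrestrict]; exact ENNReal.mul_ne_top hEtop hEtop
    · exact Filter.Eventually.of_forall fun x _ => hgx x
  rw [hrestrict, setLIntegral_const, hc, ENNReal.div_mul_cancel hS0 hStop] at hlt
  exact lt_irrefl _ hlt
end

section
/- If c₁,…,c_m > 0 satisfy c₁+…+c_m = n and u₁,…,u_m ∈ S^{n-1} satisfy Σᵢ cᵢ uᵢ⊗uᵢ = Id_n, then the body K = {x ∈ ℝⁿ : maxᵢ cᵢ⟨x,uᵢ⟩² ≤ 1} satisfies vol_n(K) ≤ ∏ᵢ (2/√cᵢ)^{cᵢ}, and hence vol_n(K)^{1/n} ≤ 2√(m/n), assuming the geometric Brascamp–Lieb inequality. -/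
/-!
`K` is the intersection of the slabs `|⟨x, uᵢ⟩| ≤ 1/√cᵢ`, so its indicator is
`∏ᵢ 1_{[-1/√cᵢ, 1/√cᵢ]}(⟨x, uᵢ⟩)^{cᵢ}`; Brascamp–Lieb bounds its integral by
`∏ᵢ (2/√cᵢ)^{cᵢ}`. Writing this product as `(∏ᵢ (4/cᵢ)^{cᵢ/n})^{n/2}`,
weighted AM-GM with weights `cᵢ/n` (which sum to 1) bounds it by `(4m/n)^{n/2}`.
-/

open MeasureTheory Real
open scoped ENNReal

lemma prod_indicator_one_rpow {α β ι : Type*} [Fintype ι] (g : ι → α → β)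
    (s : ι → Set β) {c : ι → ℝ} (hc : ∀ i, 0 < c i) (x : α) :
    ∏ i, (s i).indicator (1 : β → ℝ≥0∞) (g i x) ^ c i
      = (⋂ i, g i ⁻¹' s i).indicator 1 x := by
  by_cases hx : x ∈ ⋂ i, g i ⁻¹' s i
  · rw [Set.indicator_of_mem hx]
    refine Finset.prod_eq_one fun i _ => ?_
    rw [Set.indicator_of_mem (show g i x ∈ s i from Set.mem_iInter.mp hx i), Pi.one_apply,
      ENNReal.one_rpow]
  · obtain ⟨i, hi⟩ : ∃ i, g i x ∉ s i := by simpa using hx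
    rw [Set.indicator_of_notMem hx]
    refine Finset.prod_eq_zero (Finset.mem_univ i) ?_
    rw [Set.indicator_of_notMem hi, ENNReal.zero_rpow_of_pos (hc i)]

lemma measure_iInter_preimage_le_of_brascampLieb {α ι : Type*} [MeasurableSpace α] [Fintype ι]
    (μ : Measure α) (g : ι → α → ℝ) (hg : ∀ i, Measurable (g i)) {c : ι → ℝ}
    (hc : ∀ i, 0 < c i)
    (hBL : ∀ f : ι → ℝ → ℝ≥0∞, (∀ i, Measurable (f i)) →
      ∫⁻ x, ∏ i, f i (g i x) ^ c i ∂μ ≤ ∏ i, (∫⁻ t, f i t) ^ c i)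
    {s : ι → Set ℝ} (hs : ∀ i, MeasurableSet (s i)) :
    μ (⋂ i, g i ⁻¹' s i) ≤ ∏ i, volume (s i) ^ c i := by
  calc μ (⋂ i, g i ⁻¹' s i)
      = ∫⁻ x, (⋂ i, g i ⁻¹' s i).indicator 1 x ∂μ :=
        (lintegral_indicator_one (MeasurableSet.iInter fun i => hg i (hs i))).symm
    _ = ∫⁻ x, ∏ i, (s i).indicator 1 (g i x) ^ c i ∂μ := by
        simp_rw [prod_indicator_one_rpow g s hc]
    _ ≤ ∏ i, (∫⁻ t, (s i).indicator 1 t) ^ c i :=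
        hBL _ fun i => measurable_one.indicator (hs i)
    _ = ∏ i, volume (s i) ^ c i := by
        simp_rw [lintegral_indicator_one (hs _)]

lemma mul_sq_le_one_iff_mem_Icc {c : ℝ} (hc : 0 < c) (t : ℝ) :
    c * t ^ 2 ≤ 1 ↔ t ∈ Set.Icc (-(1 / √c)) (1 / √c) := by
  rw [mul_comm, ← le_div_iff₀ hc, Real.sq_le (by positivity), sqrt_div' _ hc.le, sqrt_one,
    Set.mem_Icc]

lemma sq_rpow_div_two {a : ℝ} (ha : 0 ≤ a) (k : ℝ) : (a ^ 2) ^ (k / 2) = a ^ k := by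
  rw [← rpow_natCast, ← rpow_mul ha]
  ring_nf

lemma prod_two_div_sqrt_rpow_le {ι : Type*} [Fintype ι] {c : ι → ℝ} (hc : ∀ i, 0 < c i)
    {n : ℝ} (hn : 0 < n) (hsum : ∑ i, c i = n) :
    ∏ i, (2 / √(c i)) ^ c i ≤ (2 * √(Fintype.card ι / n)) ^ n := by
  have hamgm : ∏ i, (4 / c i) ^ (c i / n) ≤ ∑ i, c i / n * (4 / c i) :=
    geom_mean_le_arith_mean_weighted _ _ _ (fun i _ => by have := hc i; positivity)
      (by rw [← Finset.sum_div, hsum, div_self hn.ne']) (fun i _ => by have := hc i; positivity)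
  have hmean : ∑ i, c i / n * (4 / c i) = (2 * √(Fintype.card ι / n)) ^ 2 := by
    have heach : ∀ i, c i / n * (4 / c i) = 4 / n := fun i => by
      field_simp [(hc i).ne']
    rw [Finset.sum_congr rfl fun i _ => heach i, Finset.sum_const, Finset.card_univ,
      nsmul_eq_mul, mul_pow, sq_sqrt (by positivity)]
    ring
  have hfactor : ∀ i, (2 / √(c i)) ^ c i = ((4 / c i) ^ (c i / n)) ^ (n / 2) := fun i => by
    have h4 : 4 / c i = (2 / √(c i)) ^ 2 := by
      rw [div_pow, sq_sqrt (hc i).le]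
      norm_num
    rw [← rpow_mul (by rw [h4]; positivity), h4, mul_div_assoc', div_mul_cancel₀ _ hn.ne',
      sq_rpow_div_two (by positivity)]
  calc ∏ i, (2 / √(c i)) ^ c i
      = (∏ i, (4 / c i) ^ (c i / n)) ^ (n / 2) := by
        rw [← finsetProd_rpow _ _ fun i _ => by have := hc i; positivity]
        exact Finset.prod_congr rfl fun i _ => hfactor i
    _ ≤ ((2 * √(Fintype.card ι / n)) ^ 2) ^ (n / 2) :=
        rpow_le_rpow (Finset.prod_nonneg fun i _ => rpow_nonneg (by have := hc i; positivity) _)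
          (hamgm.trans_eq hmean) (by positivity)
    _ = (2 * √(Fintype.card ι / n)) ^ n := sq_rpow_div_two (by positivity) n

theorem stmt17_general (n m : ℕ) (hn : 0 < n)
    (c : Fin m → ℝ) (hc : ∀ i, 0 < c i) (hsum : ∑ i, c i = n)
    (u : Fin m → EuclideanSpace ℝ (Fin n))
    (hBL : ∀ f : Fin m → (ℝ → ℝ≥0∞), (∀ i, Measurable (f i)) →
      ∫⁻ x : EuclideanSpace ℝ (Fin n), ∏ i, (f i (inner ℝ x (u i) : ℝ)) ^ (c i)
        ≤ ∏ i, (∫⁻ t : ℝ, f i t) ^ (c i))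
    (K : Set (EuclideanSpace ℝ (Fin n)))
    (hK : K = {x : EuclideanSpace ℝ (Fin n) | ∀ i, c i * (inner ℝ x (u i) : ℝ) ^ 2 ≤ 1}) :
    (volume K).toReal ≤ ∏ i, (2 / Real.sqrt (c i)) ^ (c i)
    ∧ (volume K).toReal ^ ((1 : ℝ) / n) ≤ 2 * Real.sqrt ((m : ℝ) / n) := by
  have hK_slabs :
      K = ⋂ i, (fun x => inner ℝ x (u i)) ⁻¹' Set.Icc (-(1 / √(c i))) (1 / √(c i)) := by
    ext x
    simp [hK, mul_sq_le_one_iff_mem_Icc (hc _)]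
  have hvol : volume K ≤ ENNReal.ofReal (∏ i, (2 / √(c i)) ^ c i) := by
    rw [hK_slabs, ENNReal.ofReal_prod_of_nonneg fun i _ => by positivity]
    refine (measure_iInter_preimage_le_of_brascampLieb volume _ (fun i => by fun_prop) hc hBL
      fun i => measurableSet_Icc).trans_eq (Finset.prod_congr rfl fun i _ => ?_)
    rw [volume_Icc, ← ENNReal.ofReal_rpow_of_nonneg (by positivity) (hc i).le]
    ring_nf
  have hbound := ENNReal.toReal_le_of_le_ofReal (by positivity) hvol
  refine ⟨hbound, ?_⟩
  have hamgm := prod_two_div_sqrt_rpow_le hc (by positivity) hsum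
  rw [Fintype.card_fin] at hamgm
  rw [one_div, rpow_inv_le_iff_of_pos ENNReal.toReal_nonneg (by positivity) (by positivity)]
  exact hbound.trans hamgm

/-- if `c₁+…+c_m = n`, `cᵢ > 0`, and unit vectors `uᵢ` satisfy
`Σ cᵢ uᵢ⊗uᵢ = Id`, then `K = {x : maxᵢ cᵢ⟨x,uᵢ⟩² ≤ 1}` satisfies
`vol_n(K) ≤ ∏ᵢ (2/√cᵢ)^{cᵢ}` and hence `vol_n(K)^{1/n} ≤ 2√(m/n)`, assuming the
geometric Brascamp–Lieb inequality. -/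
theorem stmt17 (n m : ℕ) (hn : 0 < n) (hnm : n ≤ m)
    (c : Fin m → ℝ) (hc : ∀ i, 0 < c i) (hsum : ∑ i, c i = n)
    (u : Fin m → EuclideanSpace ℝ (Fin n)) (hu : ∀ i, ‖u i‖ = 1)
    (hid : ∀ x : EuclideanSpace ℝ (Fin n),
      ∑ i, c i • ((inner ℝ (u i) x : ℝ) • u i) = x)
    (hBL : ∀ f : Fin m → (ℝ → ℝ≥0∞), (∀ i, Measurable (f i)) →
      ∫⁻ x : EuclideanSpace ℝ (Fin n), ∏ i, (f i (inner ℝ x (u i) : ℝ)) ^ (c i)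
        ≤ ∏ i, (∫⁻ t : ℝ, f i t) ^ (c i))
    (K : Set (EuclideanSpace ℝ (Fin n)))
    (hK : K = {x : EuclideanSpace ℝ (Fin n) | ∀ i, c i * (inner ℝ x (u i) : ℝ) ^ 2 ≤ 1}) :
    (volume K).toReal ≤ ∏ i, (2 / Real.sqrt (c i)) ^ (c i)
    ∧ (volume K).toReal ^ ((1 : ℝ) / n) ≤ 2 * Real.sqrt ((m : ℝ) / n) :=
  stmt17_general n m hn c hc hsum u hBL K hK
end
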